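/- Let M = [[A, B],[B^T, C]] be a symmetric positive semidefinite block matrix. Then rank M = rank A if and only if C - B^T A^† B = 0. -/

import Mathlib

open Matrix

open scoped Classical

/-- Moore–Penrose pseudoinverse of a real matrix, defined via the four Penrose
conditions (which determine it uniquely when it exists). -/
noncomputable def pinv {n m : ℕ} (A : Matrix (Fin n) (Fin m) ℝ) : Matrix (Fin m) (Fin n) ℝ :=
  if h : ∃ X : Matrix (Fin m) (Fin n) ℝ,
      A * X * A = A ∧ X * A * X = X ∧ (A * X)ᵀ = A * X ∧ (X * A)ᵀ = X * A
  then h.choose else 0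

/-!
Only the first Penrose condition `A * A† * A = A` matters. For a positive semidefinite
`M = [[A, B], [Bᵀ, C]]` the kernel of `A` lies in that of `Bᵀ` (if `A x = 0` then
`(x, 0)ᵀ M (x, 0) = 0`, so `M (x, 0) = (0, Bᵀ x)` vanishes), hence `Bᵀ A† A = Bᵀ`. This is exactly
what makes the block elimination `L M Lᵀ = diag(A, C - Bᵀ A† B)`, with
`L = [[1, 0], [-Bᵀ A†, 1]]` unimodular, go through, so
`rank M = rank A + rank (C - Bᵀ A† B)`.
-/

namespace Matrix

section PenroseConditions

variable {R : Type*} [CommRing R] {n : Type*} [Fintype n]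

def IsMoorePenroseInverse {m : Type*} [Fintype m] (A : Matrix m n R) (X : Matrix n m R) : Prop :=
  A * X * A = A ∧ X * A * X = X ∧ (A * X)ᵀ = A * X ∧ (X * A)ᵀ = X * A

theorem isMoorePenroseInverse_diagonal {K : Type*} [Field K] [DecidableEq n] (d : n → K) :
    IsMoorePenroseInverse (diagonal d) (diagonal fun i => (d i)⁻¹) := by
  have h₁ (i : n) : d i * (d i)⁻¹ * d i = d i := by
    rcases eq_or_ne (d i) 0 with h | h <;> simp [h]
  have h₂ (i : n) : (d i)⁻¹ * d i * (d i)⁻¹ = (d i)⁻¹ := by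
    rcases eq_or_ne (d i) 0 with h | h <;> simp [h]
  simp only [IsMoorePenroseInverse, diagonal_mul_diagonal, h₁, h₂, diagonal_transpose, and_self]

theorem IsMoorePenroseInverse.conj [DecidableEq n] {A X U : Matrix n n R}
    (h : IsMoorePenroseInverse A X) (hU : Uᵀ * U = 1) :
    IsMoorePenroseInverse (U * A * Uᵀ) (U * X * Uᵀ) := by
  obtain ⟨h₁, h₂, h₃, h₄⟩ := h
  have hmul (P Q : Matrix n n R) : U * P * Uᵀ * (U * Q * Uᵀ) = U * (P * Q) * Uᵀ := by
    simp only [Matrix.mul_assoc, ← Matrix.mul_assoc Uᵀ U, hU, Matrix.one_mul]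
  have htr (P : Matrix n n R) : (U * P * Uᵀ)ᵀ = U * Pᵀ * Uᵀ := by
    simp only [transpose_mul, transpose_transpose, Matrix.mul_assoc]
  exact ⟨by rw [hmul, hmul, h₁], by rw [hmul, hmul, h₂], by rw [hmul, htr, h₃],
    by rw [hmul, htr, h₄]⟩

theorem exists_isMoorePenroseInverse_of_transpose_eq [DecidableEq n] {A : Matrix n n ℝ}
    (hA : Aᵀ = A) : ∃ X, IsMoorePenroseInverse A X := by
  have hH : A.IsHermitian := by rwa [IsHermitian, conjTranspose_eq_transpose_of_trivial]
  set U : Matrix n n ℝ := (hH.eigenvectorUnitary : Matrix n n ℝ)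
  have hUT : star U = Uᵀ := conjTranspose_eq_transpose_of_trivial U
  have hU : Uᵀ * U = 1 := hUT ▸ Unitary.coe_star_mul_self _
  have hA' : A = U * diagonal hH.eigenvalues * Uᵀ := by
    simpa [← hUT] using hH.spectral_theorem
  rw [hA']
  exact ⟨_, (isMoorePenroseInverse_diagonal _).conj hU⟩

end PenroseConditions

theorem mul_pinv_mul_of_transpose_eq {n : ℕ} {A : Matrix (Fin n) (Fin n) ℝ} (hA : Aᵀ = A) :
    A * pinv A * A = A := by
  have hex := exists_isMoorePenroseInverse_of_transpose_eq hA
  unfold IsMoorePenroseInverse at hex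
  rw [pinv, dif_pos hex]
  exact hex.choose_spec.1

open scoped ComplexOrder in
theorem PosSemidef.mulVec_eq_zero_of_fromBlocks {𝕜 : Type*} [RCLike 𝕜]
    {m n : Type*} [Fintype m] [Fintype n]
    {A : Matrix m m 𝕜} {B : Matrix m n 𝕜} {C : Matrix n m 𝕜} {D : Matrix n n 𝕜}
    (hM : (fromBlocks A B C D).PosSemidef) {x : m → 𝕜} (hx : A *ᵥ x = 0) : C *ᵥ x = 0 := by
  have hMx : fromBlocks A B C D *ᵥ Sum.elim x 0 = Sum.elim (0 : m → 𝕜) (C *ᵥ x) := by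
    rw [fromBlocks_mulVec, Sum.elim_comp_inl, Sum.elim_comp_inr, hx, mulVec_zero, mulVec_zero,
      add_zero, add_zero]
  have hquad : star (Sum.elim x 0) ⬝ᵥ fromBlocks A B C D *ᵥ Sum.elim x 0 = 0 := by
    rw [hMx, Function.star_sumElim, star_zero, sumElim_dotProduct_sumElim, dotProduct_zero,
      zero_dotProduct, add_zero]
  simpa [hMx] using congrArg (· ∘ Sum.inr) ((hM.dotProduct_mulVec_zero_iff _).mp hquad)

theorem mul_mul_eq_of_mulVec_eq_zero {S : Type*} [Ring S] {m n : Type*} [Fintype m]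
    {A X : Matrix m m S} {C : Matrix n m S} (hker : ∀ x, A *ᵥ x = 0 → C *ᵥ x = 0)
    (hX : A * X * A = A) : C * X * A = C := by
  refine mulVec_injective (funext fun v => ?_)
  have hv : A *ᵥ ((X * A) *ᵥ v - v) = 0 := by
    rw [mulVec_sub, mulVec_mulVec, ← Matrix.mul_assoc, hX, sub_self]
  rw [← sub_eq_zero, Matrix.mul_assoc, ← mulVec_mulVec, ← mulVec_sub, hker _ hv]

theorem fromBlocks_congr_eq_fromBlocks_schur {R : Type*} [CommRing R] {m n : Type*} [Fintype m]
    [Fintype n] [DecidableEq m] [DecidableEq n] {A : Matrix m m R} {B : Matrix m n R}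
    (C : Matrix n n R) {X : Matrix m m R} (hA : Aᵀ = A) (hX : Bᵀ * X * A = Bᵀ) :
    fromBlocks 1 0 (-(Bᵀ * X)) 1 * fromBlocks A B Bᵀ C * (fromBlocks 1 0 (-(Bᵀ * X)) 1)ᵀ =
      fromBlocks A 0 0 (C - Bᵀ * X * B) := by
  have hX' : A * Xᵀ * B = B := by
    simpa only [transpose_mul, transpose_transpose, hA, Matrix.mul_assoc] using
      congrArg transpose hX
  simp only [fromBlocks_transpose, fromBlocks_multiply, transpose_neg, transpose_mul,
    transpose_transpose, transpose_one, transpose_zero, Matrix.one_mul, Matrix.mul_one,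
    Matrix.zero_mul, Matrix.mul_zero, Matrix.neg_mul, Matrix.mul_neg, add_zero]
  simp only [← Matrix.mul_assoc, hX', hX, neg_add_cancel, Matrix.zero_mul, neg_zero, zero_add,
    neg_add_eq_sub]

section Rank

variable {K : Type*} [Field K] {m n : Type*} [Fintype n]

theorem _root_.Submodule.finrank_prod {M N : Type*} [AddCommGroup M] [Module K M]
    [AddCommGroup N] [Module K N] [FiniteDimensional K M] [FiniteDimensional K N]
    (p : Submodule K M) (q : Submodule K N) :
    Module.finrank K (p.prod q) = Module.finrank K p + Module.finrank K q := by
  rw [← p.range_subtype, ← q.range_subtype, ← LinearMap.range_prodMap,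
    LinearMap.finrank_range_of_inj (p.injective_subtype.prodMap q.injective_subtype),
    Module.finrank_prod, p.range_subtype, q.range_subtype]

theorem rank_eq_zero_iff [DecidableEq n] {A : Matrix m n K} : A.rank = 0 ↔ A = 0 := by
  rw [rank, Submodule.finrank_eq_zero, LinearMap.range_eq_bot, ← toLin'_apply',
    LinearEquiv.map_eq_zero_iff]

variable [Fintype m] [DecidableEq m] [DecidableEq n]

theorem rank_fromBlocks_zero (A : Matrix m m K) (D : Matrix n n K) :
    (fromBlocks A 0 0 D).rank = A.rank + D.rank := by
  set b := (Pi.basisFun K m).prod (Pi.basisFun K n)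
  have h := LinearMap.toMatrix_prodMap (Pi.basisFun K m) (Pi.basisFun K n) (toLin' A) (toLin' D)
  simp only [LinearMap.toMatrix_eq_toMatrix', LinearMap.toMatrix'_toLin'] at h
  rw [← h, rank_eq_finrank_range_toLin _ b b, toLin_toMatrix, LinearMap.range_prodMap,
    Submodule.finrank_prod, rank, rank, ← toLin'_apply', ← toLin'_apply']

theorem rank_fromBlocks_eq_rank_add_rank_schur {A : Matrix m m K} {B : Matrix m n K}
    (C : Matrix n n K) {X : Matrix m m K} (hA : Aᵀ = A) (hX : Bᵀ * X * A = Bᵀ) :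
    (fromBlocks A B Bᵀ C).rank = A.rank + (C - Bᵀ * X * B).rank := by
  set L : Matrix (m ⊕ n) (m ⊕ n) K := fromBlocks 1 0 (-(Bᵀ * X)) 1
  have hL : IsUnit L.det := by simp [L]
  rw [← rank_fromBlocks_zero, ← fromBlocks_congr_eq_fromBlocks_schur C hA hX,
    rank_mul_eq_left_of_isUnit_det _ _ (by rwa [det_transpose]),
    rank_mul_eq_right_of_isUnit_det _ _ hL]

end Rank

end Matrix

theorem stmt4 {n m : ℕ} (A : Matrix (Fin n) (Fin n) ℝ) (B : Matrix (Fin n) (Fin m) ℝ)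
    (C : Matrix (Fin m) (Fin m) ℝ) (hA : Aᵀ = A)
    (hM : (Matrix.fromBlocks A B Bᵀ C).PosSemidef) :
    (Matrix.fromBlocks A B Bᵀ C).rank = A.rank ↔ C - Bᵀ * pinv A * B = 0 := by
  have hBA : Bᵀ * pinv A * A = Bᵀ :=
    mul_mul_eq_of_mulVec_eq_zero (fun _ => hM.mulVec_eq_zero_of_fromBlocks)
      (mul_pinv_mul_of_transpose_eq hA)
  rw [rank_fromBlocks_eq_rank_add_rank_schur C hA hBA, ← Matrix.rank_eq_zero_iff]
  omega
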